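/- arXiv:1703.05014 — 7 statements merged into one kernel-verified Lean document; each statement's English description precedes it below -/
import Mathlib

section
/- Let X be a Hausdorff locally convex space and 𝒮 ⊆ L(X) a subsemigroup. Then: (i) the Köhler semigroup K(𝒮) is closed under composition and is a right topological semigroup; (ii) every element of 𝒮 lies in the topological center of K(𝒮); (iii) K(𝒮) is compact if and only if the orbit 𝒮x is relatively compact in X for every x ∈ X; (iv) if every element of K(𝒮) is a continuous map on X, then K(𝒮) is semitopological; (v) if 𝒮 is abelian, then K(𝒮) is semitopological if and only if K(𝒮) is abelian. -/
/-! In the product topology on `X → X`, right composition `f ↦ f ∘ g` is always continuous and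
left composition `g ↦ c ∘ g` is continuous whenever `c` is. Hence composition-closedness and
commutation with elements of `𝒮` pass from `𝒮` to its closure by density, and uniqueness of limits
turns continuity of left composition into commutativity. Part (iii) is Tychonoff's theorem. -/

open Filter Topology Set

namespace Stmt8

variable {X : Type*} [AddCommGroup X] [Module ℂ X] [TopologicalSpace X]
  [IsTopologicalAddGroup X] [ContinuousSMul ℂ X] [T2Space X] [LocallyConvexSpace ℝ X]

/-- The underlying functions of a set of continuous linear operators. -/
def carrier (S : Set (X →L[ℂ] X)) : Set (X → X) :=
  (fun T : X →L[ℂ] X => (T : X → X)) '' S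

/-- The Köhler semigroup `K(𝒮)`: the closure of `𝒮` in `X → X` with the
topology of pointwise convergence. -/
noncomputable def Kohler (S : Set (X →L[ℂ] X)) : Set (X → X) :=
  closure (carrier S)

section ClosureOfSemigroup

variable {α : Type*} [TopologicalSpace α] {C : Set (α → α)}

theorem comp_mem_closure (hC : ∀ c ∈ C, Continuous c) (hmul : ∀ a ∈ C, ∀ b ∈ C, a ∘ b ∈ C)
    {f g : α → α} (hf : f ∈ closure C) (hg : g ∈ closure C) : f ∘ g ∈ closure C := by
  have hleft : ∀ c ∈ C, c ∘ g ∈ closure C := fun c hc =>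
    map_mem_closure (Pi.continuous_postcomp (hC c hc)) hg fun b hb => hmul c hc b hb
  simpa only [closure_closure] using map_mem_closure (Pi.continuous_precomp g) hf hleft

theorem comp_comm_of_mem_closure [T2Space α] (hC : ∀ c ∈ C, Continuous c)
    (hcomm : ∀ a ∈ C, ∀ b ∈ C, a ∘ b = b ∘ a) {c g : α → α} (hc : c ∈ C)
    (hg : g ∈ closure C) : c ∘ g = g ∘ c :=
  EqOn.closure (fun b hb => hcomm c hc b hb) (Pi.continuous_postcomp (hC c hc))
    (Pi.continuous_precomp c) hg

theorem comp_comm_of_continuousOn_comp_left [T2Space α] (hC : ∀ c ∈ C, Continuous c)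
    (hcomm : ∀ a ∈ C, ∀ b ∈ C, a ∘ b = b ∘ a) {f g : α → α} (hf : f ∈ closure C)
    (hg : g ∈ closure C) (hgC : ContinuousOn (g ∘ ·) (closure C)) : f ∘ g = g ∘ f :=
  EqOn.of_subset_closure (fun _ hc => comp_comm_of_mem_closure hC hcomm hc hg)
    (Pi.continuous_precomp g).continuousOn hgC subset_closure subset_rfl hf

end ClosureOfSemigroup

section Carrier

variable {E : Type*} [AddCommGroup E] [Module ℂ E] [TopologicalSpace E]

theorem continuous_of_mem_carrier {S : Set (E →L[ℂ] E)} {c : E → E} (hc : c ∈ carrier S) :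
    Continuous c := by
  obtain ⟨T, -, rfl⟩ := hc
  exact T.continuous

theorem comp_mem_carrier {S : Set (E →L[ℂ] E)} (hsemi : ∀ a ∈ S, ∀ b ∈ S, a ∘L b ∈ S) :
    ∀ a ∈ carrier S, ∀ b ∈ carrier S, a ∘ b ∈ carrier S := by
  rintro _ ⟨A, hA, rfl⟩ _ ⟨B, hB, rfl⟩
  exact ⟨A ∘L B, hsemi A hA B hB, rfl⟩

theorem comp_comm_carrier {S : Set (E →L[ℂ] E)} (habel : ∀ a ∈ S, ∀ b ∈ S, a ∘L b = b ∘L a) :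
    ∀ a ∈ carrier S, ∀ b ∈ carrier S, a ∘ b = b ∘ a := by
  rintro _ ⟨A, hA, rfl⟩ _ ⟨B, hB, rfl⟩
  exact congrArg DFunLike.coe (habel A hA B hB)

theorem eval_image_carrier (S : Set (E →L[ℂ] E)) (x : E) :
    Function.eval x '' carrier S = (fun T : E →L[ℂ] E => T x) '' S :=
  image_image _ _ _

end Carrier

/-- Basic properties of the Köhler semigroup of an operator
semigroup `𝒮` on a Hausdorff locally convex space `X`:
(i) `K(𝒮)` is closed under composition and right topological (for every fixed
`g ∈ K(𝒮)` the map `f ↦ f ∘ g` is continuous on `K(𝒮)`);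
(ii) every element of `𝒮` lies in the topological center (for `s ∈ 𝒮` the map
`g ↦ s ∘ g` is continuous on `K(𝒮)`);
(iii) `K(𝒮)` is compact iff every orbit `𝒮x` is relatively compact;
(iv) if all elements of `K(𝒮)` are continuous, then `K(𝒮)` is semitopological;
(v) if `𝒮` is abelian, then `K(𝒮)` is semitopological iff it is abelian. -/
theorem kohler_basic_properties (S : Set (X →L[ℂ] X))
    (hsemi : ∀ a ∈ S, ∀ b ∈ S, a ∘L b ∈ S) :
    -- (i)
    ((∀ f ∈ Kohler S, ∀ g ∈ Kohler S, f ∘ g ∈ Kohler S) ∧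
      ∀ g ∈ Kohler S, ContinuousOn (fun f : X → X => f ∘ g) (Kohler S)) ∧
    -- (ii)
    (∀ T ∈ S, ContinuousOn (fun g : X → X => (T : X → X) ∘ g) (Kohler S)) ∧
    -- (iii)
    (IsCompact (Kohler S) ↔
      ∀ x : X, IsCompact (closure ((fun T : X →L[ℂ] X => T x) '' S))) ∧
    -- (iv)
    ((∀ f ∈ Kohler S, Continuous f) →
      ∀ f ∈ Kohler S, ContinuousOn (fun g : X → X => f ∘ g) (Kohler S)) ∧
    -- (v)
    ((∀ a ∈ S, ∀ b ∈ S, a ∘L b = b ∘L a) →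
      ((∀ f ∈ Kohler S, ContinuousOn (fun g : X → X => f ∘ g) (Kohler S)) ↔
        ∀ f ∈ Kohler S, ∀ g ∈ Kohler S, f ∘ g = g ∘ f)) := by
  have hC : ∀ c ∈ carrier S, Continuous c := fun _ => continuous_of_mem_carrier
  refine ⟨⟨fun f hf g hg => comp_mem_closure hC (comp_mem_carrier hsemi) hf hg,
      fun g _ => (Pi.continuous_precomp g).continuousOn⟩,
    fun T _ => (Pi.continuous_postcomp T.continuous).continuousOn, ?_,
    fun hcont f hf => (Pi.continuous_postcomp (hcont f hf)).continuousOn,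
    fun habel => ⟨fun hleft f hf g hg => ?_, fun hcomm f hf => ?_⟩⟩
  · simp only [Kohler, Pi.isCompact_closure_iff, eval_image_carrier]
  · exact comp_comm_of_continuousOn_comp_left hC (comp_comm_carrier habel) hf hg (hleft g hg)
  · exact (Pi.continuous_precomp f).continuousOn.congr fun g hg => hcomm f hf g hg

end Stmt8
end

section
/- Let X be a barrelled locally convex space in which every von Neumann bounded subset is relatively compact (i.e., X is a Montel space), and let 𝒮 ⊆ L(X) be a pointwise bounded subsemigroup (each orbit 𝒮x is von Neumann bounded). Then the Köhler semigroup K(𝒮) is a compact semitopological semigroup consisting of continuous linear operators on X. -/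
/-! Pointwise boundedness and the Montel property make every orbit relatively compact, so
Tychonoff gives compactness of `K(𝒮)`. Barrelledness turns pointwise boundedness into
equicontinuity (Banach–Steinhaus); equicontinuity survives pointwise closure, so every element
of `K(𝒮)` is continuous, and linearity is a closed condition. In the product topology
`f ↦ f ∘ g` is always continuous and `g ↦ f ∘ g` is continuous as soon as `f` is; applying
these twice shows that the closure of a semigroup of continuous maps is again a semigroup. -/

open Filter Topology Set

namespace Stmt10

variable {X : Type*} [AddCommGroup X] [Module ℂ X] [TopologicalSpace X]
  [IsTopologicalAddGroup X] [ContinuousSMul ℂ X] [T2Space X] [LocallyConvexSpace ℝ X]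
  [BarrelledSpace ℂ X]

/-- The underlying functions of a set of continuous linear operators. -/
def carrier (S : Set (X →L[ℂ] X)) : Set (X → X) :=
  (fun T : X →L[ℂ] X => (T : X → X)) '' S

/-- The Köhler semigroup `K(𝒮)`: the closure of `𝒮` in `X → X` with the
topology of pointwise convergence. -/
noncomputable def Kohler (S : Set (X →L[ℂ] X)) : Set (X → X) :=
  closure (carrier S)

theorem comp_mem_closure_of_forall_continuous {α : Type*} [TopologicalSpace α]
    {M : Set (α → α)} (hcont : ∀ T ∈ M, Continuous T)
    (hcomp : ∀ T ∈ M, ∀ U ∈ M, T ∘ U ∈ M)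
    {f g : α → α} (hf : f ∈ closure M) (hg : g ∈ closure M) : f ∘ g ∈ closure M := by
  have hleft : ∀ T ∈ M, T ∘ g ∈ closure M := fun T hT =>
    map_mem_closure (Pi.continuous_postcomp (hcont T hT)) hg fun U hU => hcomp T hT U hU
  simpa only [closure_closure] using map_mem_closure (Pi.continuous_precomp g) hf hleft

theorem isLinearMap_of_mem_closure_image_coe {R M M₂ : Type*} [Semiring R]
    [AddCommMonoid M] [Module R M] [TopologicalSpace M]
    [AddCommMonoid M₂] [Module R M₂] [TopologicalSpace M₂] [T2Space M₂]
    [ContinuousAdd M₂] [ContinuousConstSMul R M₂]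
    {S : Set (M →L[R] M₂)} {f : M → M₂}
    (hf : f ∈ closure ((fun T : M →L[R] M₂ => (T : M → M₂)) '' S)) : IsLinearMap R f := by
  have hsub : (fun T : M →L[R] M₂ => (T : M → M₂)) '' S ⊆
      range ((↑) : (M →ₗ[R] M₂) → M → M₂) := by
    rintro _ ⟨T, -, rfl⟩
    exact ⟨T.toLinearMap, rfl⟩
  obtain ⟨L, rfl⟩ := (LinearMap.isClosed_range_coe M M₂ (RingHom.id R)).closure_subset
    (closure_mono hsub hf)
  exact L.isLinear

theorem continuous_of_mem_closure_of_isVonNBounded_orbits {𝕜 E F : Type*}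
    [NontriviallyNormedField 𝕜]
    [AddCommGroup E] [Module 𝕜 E] [TopologicalSpace E] [IsTopologicalAddGroup E]
    [ContinuousSMul 𝕜 E] [BarrelledSpace 𝕜 E]
    [AddCommGroup F] [Module 𝕜 F] [TopologicalSpace F] [IsTopologicalAddGroup F]
    [PolynormableSpace 𝕜 F]
    {S : Set (E →L[𝕜] F)}
    (hbdd : ∀ x : E, Bornology.IsVonNBounded 𝕜 ((fun T : E →L[𝕜] F => T x) '' S))
    {f : E → F} (hf : f ∈ closure ((fun T : E →L[𝕜] F => (T : E → F)) '' S)) :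
    Continuous f := by
  -- any compatible uniform structures will do, since the conclusion is purely topological
  let : UniformSpace E := IsTopologicalAddGroup.rightUniformSpace E
  let : UniformSpace F := IsTopologicalAddGroup.rightUniformSpace F
  have : IsUniformAddGroup E := isUniformAddGroup_of_addCommGroup
  have : IsUniformAddGroup F := isUniformAddGroup_of_addCommGroup
  have hequi : UniformEquicontinuous ((↑) ∘ fun T : S => (T : E →L[𝕜] F)) :=
    PolynormableSpace.banach_steinhaus fun x =>
      image_eq_range (fun T : E →L[𝕜] F => T x) S ▸ hbdd x
  have hequiS : Set.Equicontinuous ((fun T : E →L[𝕜] F => (T : E → F)) '' S) := by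
    rw [image_eq_range]
    exact equicontinuous_iff_range.mp hequi.equicontinuous
  exact hequiS.closure.continuous_of_mem hf

open scoped ComplexOrder in
theorem polynormableSpace_of_locallyConvexSpace_real {𝕜 E : Type*} [RCLike 𝕜]
    [AddCommGroup E] [Module 𝕜 E] [Module ℝ E] [IsScalarTower ℝ 𝕜 E]
    [TopologicalSpace E] [IsTopologicalAddGroup E] [ContinuousSMul 𝕜 E]
    [LocallyConvexSpace ℝ E] : PolynormableSpace 𝕜 E := by
  have : ContinuousSMul ℝ E := IsScalarTower.continuousSMul 𝕜
  have : LocallyConvexSpace 𝕜 E := (locallyConvexSpace_iff_zero 𝕜 E).mpr <| by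
    simpa only [convex_RCLike_iff_convex_real] using (locallyConvexSpace_iff_zero ℝ E).mp ‹_›
  infer_instance

/-- If `X` is a Montel space (barrelled, and every von
Neumann bounded set is relatively compact) and `𝒮 ⊆ L(X)` is a pointwise
bounded subsemigroup, then `K(𝒮)` is a compact semitopological semigroup
consisting of continuous linear operators. -/
theorem montel_kohler_compact_semitopological
    (hMontel : ∀ B : Set X, Bornology.IsVonNBounded ℂ B → IsCompact (closure B))
    (S : Set (X →L[ℂ] X))
    (hsemi : ∀ a ∈ S, ∀ b ∈ S, a ∘L b ∈ S)
    (hbdd : ∀ x : X, Bornology.IsVonNBounded ℂ ((fun T : X →L[ℂ] X => T x) '' S)) :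
    IsCompact (Kohler S) ∧
    (∀ f ∈ Kohler S, Continuous f ∧ IsLinearMap ℂ f) ∧
    (∀ f ∈ Kohler S, ∀ g ∈ Kohler S, f ∘ g ∈ Kohler S) ∧
    (∀ g ∈ Kohler S, ContinuousOn (fun f : X → X => f ∘ g) (Kohler S)) ∧
    (∀ f ∈ Kohler S, ContinuousOn (fun g : X → X => f ∘ g) (Kohler S)) := by
  have : PolynormableSpace ℂ X := polynormableSpace_of_locallyConvexSpace_real
  have hcont : ∀ f ∈ Kohler S, Continuous f := fun f hf =>
    continuous_of_mem_closure_of_isVonNBounded_orbits hbdd hf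
  have hcompact : IsCompact (Kohler S) := by
    refine Pi.isCompact_closure_iff.mpr fun x => ?_
    simpa only [carrier, image_image] using hMontel _ (hbdd x)
  have hmul : ∀ f ∈ Kohler S, ∀ g ∈ Kohler S, f ∘ g ∈ Kohler S := by
    refine fun f hf g hg => comp_mem_closure_of_forall_continuous ?_ ?_ hf hg
    · rintro _ ⟨T, -, rfl⟩
      exact T.continuous
    · rintro _ ⟨T, hT, rfl⟩ _ ⟨U, hU, rfl⟩
      exact ⟨T ∘L U, hsemi T hT U hU, rfl⟩
  exact ⟨hcompact, fun f hf => ⟨hcont f hf, isLinearMap_of_mem_closure_image_coe hf⟩, hmul,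
    fun g _ => (Pi.continuous_precomp g).continuousOn,
    fun f hf => (Pi.continuous_postcomp (hcont f hf)).continuousOn⟩

end Stmt10
end

section
/- Let X₁ be a Hausdorff locally convex space, X₂ ⊆ X₁ a linear subspace equipped with the subspace topology, and 𝒮₁ ⊆ L(X₁) a subsemigroup leaving X₂ invariant; set 𝒮₂ = {S|_{X₂} : S ∈ 𝒮₁} ⊆ L(X₂). If the Köhler semigroups K(𝒮₁) and K(𝒮₂) are compact, then every R ∈ K(𝒮₁) maps X₂ into X₂, the restriction R|_{X₂} belongs to K(𝒮₂), and the map K(𝒮₁) → K(𝒮₂), R ↦ R|_{X₂}, is a continuous surjective multiplicative map (an epimorphism of right topological semigroups). -/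
/-!
Pair each `T ∈ 𝒮₁` with its restriction `T|_p`: this gives a set `P` whose two projections
are `𝒮₁` and `𝒮₂`, so `closure P ⊆ K(𝒮₁) × K(𝒮₂)`. As `K(𝒮₂)` is compact, the tube lemma shows
that `closure P` projects onto `K(𝒮₁)`; symmetrically, as `K(𝒮₁)` is compact, it projects onto
`K(𝒮₂)`. The identities `R x = g x` for `x ∈ p` pass to pointwise limits because `X` is
Hausdorff, so `closure P` is the graph of `R ↦ R|_p`, which therefore maps `K(𝒮₁)` onto `K(𝒮₂)`.
Continuity and multiplicativity are checked pointwise.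
-/

open Filter Topology Set
open scoped Classical

namespace Stmt11

variable {X : Type*} [AddCommGroup X] [Module ℂ X] [TopologicalSpace X]
  [IsTopologicalAddGroup X] [ContinuousSMul ℂ X] [T2Space X] [LocallyConvexSpace ℝ X]

/-- The underlying functions of a set of continuous linear operators. -/
def carrier (X : Type*) [AddCommGroup X] [Module ℂ X] [TopologicalSpace X]
    (S : Set (X →L[ℂ] X)) : Set (X → X) :=
  (fun T : X →L[ℂ] X => (T : X → X)) '' S

/-- The Köhler semigroup `K(𝒮)`: the closure of `𝒮` in `X → X` with the
topology of pointwise convergence. -/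
noncomputable def Kohler (X : Type*) [AddCommGroup X] [Module ℂ X] [TopologicalSpace X]
    (S : Set (X →L[ℂ] X)) : Set (X → X) :=
  closure (carrier X S)

/-- Restriction of a map `R : X → X` to a subspace `p` (defined to be the
identity in the irrelevant case where `p` is not invariant under `R`). -/
noncomputable def resMap (p : Submodule ℂ X) (R : X → X) : p → p :=
  fun x => if h : R (x : X) ∈ p then (⟨R (x : X), h⟩ : p) else x

section ClosureOfProduct

variable {α β : Type*} [TopologicalSpace α] [TopologicalSpace β] {s : Set (α × β)}

theorem exists_prodMk_mem_closure_of_isCompact_closure_snd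
    (hs : IsCompact (closure (Prod.snd '' s))) {a : α} (ha : a ∈ closure (Prod.fst '' s)) :
    ∃ b, (a, b) ∈ closure s := by
  set K := closure (Prod.snd '' s)
  have : CompactSpace K := isCompact_iff_compactSpace.1 hs
  let t : Set (α × K) := Prod.map id (↑) ⁻¹' closure s
  have ht : IsClosed (Prod.fst '' t) :=
    isClosedMap_fst_of_compactSpace _
      (isClosed_closure.preimage (continuous_id.prodMap continuous_subtype_val))
  have hst : Prod.fst '' s ⊆ Prod.fst '' t := by
    rintro _ ⟨⟨x, y⟩, hxy, rfl⟩
    exact ⟨(x, ⟨y, subset_closure ⟨_, hxy, rfl⟩⟩), subset_closure hxy, rfl⟩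
  obtain ⟨⟨_, b⟩, hab, rfl⟩ := ht.closure_subset_iff.2 hst ha
  exact ⟨b, hab⟩

theorem exists_prodMk_mem_closure_of_isCompact_closure_fst
    (hs : IsCompact (closure (Prod.fst '' s))) {b : β} (hb : b ∈ closure (Prod.snd '' s)) :
    ∃ a, (a, b) ∈ closure s := by
  have hswap : Prod.swap '' closure s = closure (Prod.swap '' s) := by
    simpa using (Homeomorph.prodComm α β).image_closure s
  obtain ⟨a, ha⟩ := exists_prodMk_mem_closure_of_isCompact_closure_snd (s := Prod.swap '' s)
    (by rwa [← image_comp]) (by rwa [← image_comp])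
  rw [← hswap, image_swap_eq_preimage_swap] at ha
  exact ⟨a, ha⟩

end ClosureOfProduct

section Restriction

variable {E : Type*} [AddCommGroup E] [Module ℂ E] {p : Submodule ℂ E}

theorem coe_resMap_of_mem {R : E → E} {x : p} (hx : R x ∈ p) : (resMap p R x : E) = R x := by
  simp [resMap, hx]

theorem resMap_eq_of_forall_coe_eq {R : E → E} {g : p → p} (h : ∀ x : p, R x = g x) :
    resMap p R = g :=
  funext fun x => Subtype.ext <| (coe_resMap_of_mem (h x ▸ (g x).2)).trans (h x)

theorem resMap_comp {R R' : E → E} (hR : MapsTo R p p) (hR' : MapsTo R' p p) :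
    resMap p (R ∘ R') = resMap p R ∘ resMap p R' :=
  resMap_eq_of_forall_coe_eq fun x => by
    simp only [Function.comp_apply]
    rw [coe_resMap_of_mem (hR (resMap p R' x).2), coe_resMap_of_mem (hR' x.2)]

variable [TopologicalSpace E]

theorem continuousOn_resMap {K : Set (E → E)} (hK : ∀ R ∈ K, MapsTo R p p) :
    ContinuousOn (resMap p) K :=
  continuousOn_pi.2 fun x => IsInducing.subtypeVal.continuousOn_iff.2 <|
    (continuous_apply (x : E)).continuousOn.congr fun R hR => coe_resMap_of_mem (hK R hR x.2)

def restrictionPairs (p : Submodule ℂ E) (S : Set (E →L[ℂ] E)) : Set ((E → E) × (p → p)) :=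
  (fun T : E →L[ℂ] E => ((T : E → E), resMap p T)) '' S

theorem image_fst_restrictionPairs (S : Set (E →L[ℂ] E)) :
    Prod.fst '' restrictionPairs p S = carrier E S := by
  rw [restrictionPairs, image_image]
  rfl

theorem image_snd_restrictionPairs {S₁ : Set (E →L[ℂ] E)} {S₂ : Set (p →L[ℂ] p)}
    (hinv : ∀ T ∈ S₁, MapsTo T p p)
    (hres : ∀ T' : p →L[ℂ] p, T' ∈ S₂ ↔ ∃ T ∈ S₁, ∀ x : p, (T' x : E) = T (x : E)) :
    Prod.snd '' restrictionPairs p S₁ = carrier p S₂ := by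
  rw [restrictionPairs, image_image]
  ext g
  constructor
  · rintro ⟨T, hT, rfl⟩
    exact ⟨T.restrict (hinv T hT), (hres _).2 ⟨T, hT, fun _ => rfl⟩,
      (resMap_eq_of_forall_coe_eq fun _ => rfl).symm⟩
  · rintro ⟨T', hT', rfl⟩
    obtain ⟨T, hT, hTT'⟩ := (hres T').1 hT'
    exact ⟨T, hT, resMap_eq_of_forall_coe_eq fun x => (hTT' x).symm⟩

theorem apply_eq_of_mem_closure_restrictionPairs [T2Space E] {S : Set (E →L[ℂ] E)}
    (hinv : ∀ T ∈ S, MapsTo T p p) {R : E → E} {g : p → p}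
    (h : (R, g) ∈ closure (restrictionPairs p S)) (x : p) : R x = g x := by
  have hclosed : IsClosed {q : (E → E) × (p → p) | ∀ x : p, q.1 x = q.2 x} := by
    simp only [ofPred_forall]
    exact isClosed_iInter fun x => isClosed_eq (by fun_prop) (by fun_prop)
  refine closure_minimal ?_ hclosed h x
  rintro _ ⟨T, hT, rfl⟩ x
  exact (coe_resMap_of_mem (hinv T hT x.2)).symm

end Restriction

theorem restriction_epimorphism_general (p : Submodule ℂ X)
    (S₁ : Set (X →L[ℂ] X)) (S₂ : Set (p →L[ℂ] p))
    (hinv : ∀ T ∈ S₁, ∀ x : X, x ∈ p → T x ∈ p)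
    (hres : ∀ T' : p →L[ℂ] p, T' ∈ S₂ ↔ ∃ T ∈ S₁, ∀ x : p, (T' x : X) = T (x : X))
    (hK₁ : IsCompact (Kohler X S₁)) (hK₂ : IsCompact (Kohler p S₂)) :
    (∀ R ∈ Kohler X S₁, ∀ x : X, x ∈ p → R x ∈ p) ∧
    (∀ R ∈ Kohler X S₁, resMap p R ∈ Kohler p S₂) ∧
    (∀ g ∈ Kohler p S₂, ∃ R ∈ Kohler X S₁, resMap p R = g) ∧
    ContinuousOn (resMap p) (Kohler X S₁) ∧
    (∀ R ∈ Kohler X S₁, ∀ R' ∈ Kohler X S₁,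
      resMap p (R ∘ R') = resMap p R ∘ resMap p R') := by
  have hfst : closure (Prod.fst '' restrictionPairs p S₁) = Kohler X S₁ := by
    rw [image_fst_restrictionPairs]; rfl
  have hsnd : closure (Prod.snd '' restrictionPairs p S₁) = Kohler p S₂ := by
    rw [image_snd_restrictionPairs hinv hres]; rfl
  have hrestrict : ∀ R ∈ Kohler X S₁, ∃ g ∈ Kohler p S₂, ∀ x : p, R x = g x := by
    intro R hR
    obtain ⟨g, hRg⟩ :=
      exists_prodMk_mem_closure_of_isCompact_closure_snd (hsnd ▸ hK₂) (hfst ▸ hR)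
    exact ⟨g, hsnd ▸ map_mem_closure continuous_snd hRg (mapsTo_image _ _),
      apply_eq_of_mem_closure_restrictionPairs hinv hRg⟩
  have hmaps : ∀ R ∈ Kohler X S₁, MapsTo R p p := fun R hR x hx => by
    obtain ⟨g, -, hRg⟩ := hrestrict R hR
    exact hRg ⟨x, hx⟩ ▸ (g _).2
  refine ⟨hmaps, fun R hR => ?_, fun g hg => ?_, continuousOn_resMap hmaps,
    fun R hR R' hR' => resMap_comp (hmaps R hR) (hmaps R' hR')⟩
  · obtain ⟨g, hg, hRg⟩ := hrestrict R hR
    rwa [resMap_eq_of_forall_coe_eq hRg]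
  · obtain ⟨R, hRg⟩ :=
      exists_prodMk_mem_closure_of_isCompact_closure_fst (hfst ▸ hK₁) (hsnd ▸ hg)
    exact ⟨R, hfst ▸ map_mem_closure continuous_fst hRg (mapsTo_image _ _),
      resMap_eq_of_forall_coe_eq (apply_eq_of_mem_closure_restrictionPairs hinv hRg)⟩

/-- Let `X₂ = p` be a subspace of `X₁ = X` (with the subspace
topology), `𝒮₁` a subsemigroup of `L(X₁)` leaving `p` invariant, and `𝒮₂` the
semigroup of the restrictions. If `K(𝒮₁)` and `K(𝒮₂)` are compact, then every
`R ∈ K(𝒮₁)` leaves `p` invariant, its restriction lies in `K(𝒮₂)`, and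
`R ↦ R|_p` is a continuous surjective multiplicative map `K(𝒮₁) → K(𝒮₂)`. -/
theorem restriction_epimorphism (p : Submodule ℂ X)
    (S₁ : Set (X →L[ℂ] X)) (S₂ : Set (p →L[ℂ] p))
    (hsemi₁ : ∀ a ∈ S₁, ∀ b ∈ S₁, a ∘L b ∈ S₁)
    (hinv : ∀ T ∈ S₁, ∀ x : X, x ∈ p → T x ∈ p)
    (hres : ∀ T' : p →L[ℂ] p, T' ∈ S₂ ↔ ∃ T ∈ S₁, ∀ x : p, (T' x : X) = T (x : X))
    (hK₁ : IsCompact (Kohler X S₁)) (hK₂ : IsCompact (Kohler p S₂)) :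
    (∀ R ∈ Kohler X S₁, ∀ x : X, x ∈ p → R x ∈ p) ∧
    (∀ R ∈ Kohler X S₁, resMap p R ∈ Kohler p S₂) ∧
    (∀ g ∈ Kohler p S₂, ∃ R ∈ Kohler X S₁, resMap p R = g) ∧
    ContinuousOn (resMap p) (Kohler X S₁) ∧
    (∀ R ∈ Kohler X S₁, ∀ R' ∈ Kohler X S₁,
      resMap p (R ∘ R') = resMap p R ∘ resMap p R') :=
  restriction_epimorphism_general p S₁ S₂ hinv hres hK₁ hK₂

end Stmt11
end

section
/- Let X₁, X₂ be Hausdorff locally convex spaces, 𝒮₁ ⊆ L(X₁) and 𝒮₂ ⊆ L(X₂) subsemigroups, Φ ∈ L(X₁,X₂) a surjective continuous linear map, and Ψ : 𝒮₁ → 𝒮₂ a surjective semigroup homomorphism with Φ(Sx) = Ψ(S)(Φ(x)) for all S ∈ 𝒮₁ and x ∈ X₁. If K(𝒮₁) is compact, then there is a well-defined map Ψ̂ : K(𝒮₁) → K(𝒮₂) determined by Ψ̂(S)(Φ(x)) = Φ(Sx) for all S ∈ K(𝒮₁) and x ∈ X₁, and Ψ̂ is a continuous surjective multiplicative map (an epimorphism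 of right topological semigroups) with Ψ̂|_{𝒮₁} = Ψ. -/
/-! Take `Ψ̂ R := Φ ∘ R ∘ σ` for a right inverse `σ` of `Φ`; it is continuous for pointwise
convergence. For `R ∈ 𝒮₁` the map `Φ ∘ R` factors through `Φ`, a closed condition on `R`, so it
holds on `K(𝒮₁)`; there `Ψ̂ R` is independent of `σ`, intertwines `R` and is multiplicative.
Since `Ψ̂` maps `𝒮₁` onto `𝒮₂` and `K(𝒮₁)` is compact, it maps `K(𝒮₁)` onto `K(𝒮₂)`. -/

open Filter Topology Set

namespace Stmt12

/-- The underlying functions of a set of continuous linear operators. -/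
def carrier (X : Type*) [AddCommGroup X] [Module ℂ X] [TopologicalSpace X]
    (S : Set (X →L[ℂ] X)) : Set (X → X) :=
  (fun T : X →L[ℂ] X => (T : X → X)) '' S

/-- The Köhler semigroup `K(𝒮)`: the closure of `𝒮` in `X → X` with the
topology of pointwise convergence. -/
noncomputable def Kohler (X : Type*) [AddCommGroup X] [Module ℂ X] [TopologicalSpace X]
    (S : Set (X →L[ℂ] X)) : Set (X → X) :=
  closure (carrier X S)

variable {X₁ : Type*} [AddCommGroup X₁] [Module ℂ X₁] [TopologicalSpace X₁]
  [IsTopologicalAddGroup X₁] [ContinuousSMul ℂ X₁] [T2Space X₁] [LocallyConvexSpace ℝ X₁]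
variable {X₂ : Type*} [AddCommGroup X₂] [Module ℂ X₂] [TopologicalSpace X₂]
  [IsTopologicalAddGroup X₂] [ContinuousSMul ℂ X₂] [T2Space X₂] [LocallyConvexSpace ℝ X₂]

section Descend

variable {X Y : Type*}

def descend (Φ : X → Y) (σ : Y → X) (R : X → X) : Y → Y := Φ ∘ R ∘ σ

lemma continuous_descend [TopologicalSpace X] [TopologicalSpace Y] {Φ : X → Y}
    (hΦ : Continuous Φ) (σ : Y → X) : Continuous (descend Φ σ) :=
  continuous_pi fun y => hΦ.comp (continuous_apply (σ y))

lemma isClosed_setOf_comp_factorsThrough [TopologicalSpace X] [TopologicalSpace Y] [T2Space Y]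
    {Φ : X → Y} (hΦ : Continuous Φ) : IsClosed {R : X → X | (Φ ∘ R).FactorsThrough Φ} := by
  simp only [Function.FactorsThrough, ofPred_forall]
  refine isClosed_iInter fun a => isClosed_iInter fun b => isClosed_iInter fun _ => ?_
  exact isClosed_eq (hΦ.comp (continuous_apply a)) (hΦ.comp (continuous_apply b))

lemma comp_factorsThrough_of_semiconj {Φ : X → Y} {T : X → X} {G : Y → Y}
    (h : Function.Semiconj Φ T G) : (Φ ∘ T).FactorsThrough Φ := fun a b hab => by
  simp only [Function.comp_apply, h a, h b, hab]

variable {Φ : X → Y} {σ : Y → X}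

lemma semiconj_descend (hσ : Function.RightInverse σ Φ) {R : X → X}
    (hR : (Φ ∘ R).FactorsThrough Φ) : Function.Semiconj Φ R (descend Φ σ R) :=
  fun x => (hR (hσ (Φ x))).symm

lemma descend_comp (hσ : Function.RightInverse σ Φ) {R : X → X}
    (hR : (Φ ∘ R).FactorsThrough Φ) (R' : X → X) :
    descend Φ σ (R ∘ R') = descend Φ σ R ∘ descend Φ σ R' :=
  funext fun y => semiconj_descend hσ hR (R' (σ y))

lemma descend_eq_of_semiconj (hσ : Function.RightInverse σ Φ) {T : X → X} {G : Y → Y}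
    (h : Function.Semiconj Φ T G) : descend Φ σ T = G :=
  funext fun y => (h (σ y)).trans (congrArg G (hσ y))

end Descend

lemma descend_image_carrier {X Y : Type*} [AddCommGroup X] [Module ℂ X] [TopologicalSpace X]
    [AddCommGroup Y] [Module ℂ Y] [TopologicalSpace Y] {S₁ : Set (X →L[ℂ] X)}
    {S₂ : Set (Y →L[ℂ] Y)} {Φ : X → Y} {σ : Y → X} (hσ : Function.RightInverse σ Φ)
    {Ψ : (X →L[ℂ] X) → (Y →L[ℂ] Y)} (hΨ : Ψ '' S₁ = S₂)
    (hΨint : ∀ T ∈ S₁, Function.Semiconj Φ T (Ψ T)) :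
    descend Φ σ '' carrier X S₁ = carrier Y S₂ := by
  rw [carrier, carrier, ← hΨ, image_image, image_image]
  exact image_congr fun T hT => descend_eq_of_semiconj hσ (hΨint T hT)

theorem factor_epimorphism_general
    (S₁ : Set (X₁ →L[ℂ] X₁)) (S₂ : Set (X₂ →L[ℂ] X₂))
    (Φ : X₁ →L[ℂ] X₂) (hΦ : Function.Surjective Φ)
    (Ψ : (X₁ →L[ℂ] X₁) → (X₂ →L[ℂ] X₂))
    (hΨmem : ∀ T ∈ S₁, Ψ T ∈ S₂)
    (hΨsurj : ∀ T₂ ∈ S₂, ∃ T₁ ∈ S₁, Ψ T₁ = T₂)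
    (hΨint : ∀ T ∈ S₁, ∀ x : X₁, Φ (T x) = Ψ T (Φ x))
    (hK₁ : IsCompact (Kohler X₁ S₁)) :
    ∃ F : (X₁ → X₁) → (X₂ → X₂),
      (∀ R ∈ Kohler X₁ S₁, ∀ x : X₁, F R (Φ x) = Φ (R x)) ∧
      (∀ R ∈ Kohler X₁ S₁, F R ∈ Kohler X₂ S₂) ∧
      (∀ g ∈ Kohler X₂ S₂, ∃ R ∈ Kohler X₁ S₁, F R = g) ∧
      ContinuousOn F (Kohler X₁ S₁) ∧
      (∀ R ∈ Kohler X₁ S₁, ∀ R' ∈ Kohler X₁ S₁, F (R ∘ R') = F R ∘ F R') ∧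
      (∀ T ∈ S₁, F (T : X₁ → X₁) = (Ψ T : X₂ → X₂)) := by
  obtain ⟨σ, hσ⟩ := hΦ.hasRightInverse
  have hΨ : Ψ '' S₁ = S₂ := Subset.antisymm (image_subset_iff.2 hΨmem) hΨsurj
  have hcont := continuous_descend Φ.continuous σ
  have hfac : ∀ R ∈ Kohler X₁ S₁, (Φ ∘ R).FactorsThrough Φ :=
    closure_minimal (by rintro _ ⟨T, hT, rfl⟩; exact comp_factorsThrough_of_semiconj (hΨint T hT))
      (isClosed_setOf_comp_factorsThrough Φ.continuous)
  have hK : descend Φ σ '' Kohler X₁ S₁ = Kohler X₂ S₂ := by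
    rw [Kohler, image_closure_of_isCompact hK₁ hcont.continuousOn,
      descend_image_carrier hσ hΨ hΨint, Kohler]
  refine ⟨descend Φ σ, fun R hR x => (semiconj_descend hσ (hfac R hR) x).symm,
    fun R hR => hK ▸ mem_image_of_mem _ hR, fun g hg => by rwa [← hK] at hg, hcont.continuousOn,
    fun R hR R' _ => descend_comp hσ (hfac R hR) R',
    fun T hT => descend_eq_of_semiconj hσ (hΨint T hT)⟩

/-- Given a surjective continuous linear map `Φ : X₁ → X₂`
and a surjective semigroup homomorphism `Ψ : 𝒮₁ → 𝒮₂` intertwined by `Φ`, if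
`K(𝒮₁)` is compact then `Ψ` extends to a continuous surjective multiplicative
map `Ψ̂ : K(𝒮₁) → K(𝒮₂)` determined by `Ψ̂(S)(Φ x) = Φ (S x)`. -/
theorem factor_epimorphism
    (S₁ : Set (X₁ →L[ℂ] X₁)) (S₂ : Set (X₂ →L[ℂ] X₂))
    (hsemi₁ : ∀ a ∈ S₁, ∀ b ∈ S₁, a ∘L b ∈ S₁)
    (hsemi₂ : ∀ a ∈ S₂, ∀ b ∈ S₂, a ∘L b ∈ S₂)
    (Φ : X₁ →L[ℂ] X₂) (hΦ : Function.Surjective Φ)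
    (Ψ : (X₁ →L[ℂ] X₁) → (X₂ →L[ℂ] X₂))
    (hΨmem : ∀ T ∈ S₁, Ψ T ∈ S₂)
    (hΨsurj : ∀ T₂ ∈ S₂, ∃ T₁ ∈ S₁, Ψ T₁ = T₂)
    (hΨmul : ∀ a ∈ S₁, ∀ b ∈ S₁, Ψ (a ∘L b) = Ψ a ∘L Ψ b)
    (hΨint : ∀ T ∈ S₁, ∀ x : X₁, Φ (T x) = Ψ T (Φ x))
    (hK₁ : IsCompact (Kohler X₁ S₁)) :
    ∃ F : (X₁ → X₁) → (X₂ → X₂),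
      (∀ R ∈ Kohler X₁ S₁, ∀ x : X₁, F R (Φ x) = Φ (R x)) ∧
      (∀ R ∈ Kohler X₁ S₁, F R ∈ Kohler X₂ S₂) ∧
      (∀ g ∈ Kohler X₂ S₂, ∃ R ∈ Kohler X₁ S₁, F R = g) ∧
      ContinuousOn F (Kohler X₁ S₁) ∧
      (∀ R ∈ Kohler X₁ S₁, ∀ R' ∈ Kohler X₁ S₁, F (R ∘ R') = F R ∘ F R') ∧
      (∀ T ∈ S₁, F (T : X₁ → X₁) = (Ψ T : X₂ → X₂)) :=
  factor_epimorphism_general S₁ S₂ Φ hΦ Ψ hΨmem hΨsurj hΨint hK₁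

end Stmt12
end

section
/- Let (K;S) be a topological dynamical system. For every s ∈ S and every a ∈ ℓ¹(K) there is an element T_s'a ∈ ℓ¹(K), given by (T_s'a)(x) = ∑_{y ∈ K, sy = x} a(y), satisfying ⟨f, T_s'a⟩ = ∑_{x∈K} a(x) f(sx) for all f ∈ C(K); moreover, for every a ∈ ℓ¹(K) the orbit {T_s'a : s ∈ S} is relatively compact in ℓ¹(K) with respect to the topology σ(ℓ¹(K), C(K)). -/
open Filter Topology Set

namespace Stmt13

variable {K : Type*} [TopologicalSpace K] [CompactSpace K] [T2Space K]
variable {S : Type*} [Semigroup S] [TopologicalSpace S] [SMul S K]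
  [IsScalarTower S S K] [ContinuousSMul S K]

/-- `ℓ¹(K)`: the absolutely summable families on `K`. -/
abbrev L1 (K : Type*) : Type _ := {a : K → ℂ // Summable fun x => ‖a x‖}

/-- The topology `σ(ℓ¹(K), C(K))` on `ℓ¹(K)`, induced by the pairings
`a ↦ ∑_{x ∈ K} a x * f x` with `f ∈ C(K)`. -/
noncomputable def ell1WeakTop (K : Type*) [TopologicalSpace K] :
    TopologicalSpace (L1 K) :=
  TopologicalSpace.induced
    (fun a (f : C(K, ℂ)) => ∑' x : K, (a : K → ℂ) x * f x) inferInstance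

/-- The fibre sum `(T_s' a)(x) = ∑_{y : s y = x} a y`. -/
noncomputable def adjAt (s : S) (a : K → ℂ) : K → ℂ :=
  fun x => ∑' y : {y : K // s • y = x}, a (y : K)

/-!
Every map `g : K → K` pushes `a ∈ ℓ¹(K)` forward to the fibre sums `g_* a`, and
`⟨f, g_* a⟩ = ∑ₓ a x f (g x)`. By dominated convergence this pairing depends continuously on
`g` in the topology of pointwise convergence, so `g ↦ g_* a` maps the Tychonoff-compact space
`K^K` continuously onto a `σ(ℓ¹(K), C(K))`-compact set containing the orbit. The weak topology
is induced from a Hausdorff space, hence is R₁, and in an R₁ space the closure of a subset of a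
compact set is compact.
-/

section FiberSum

variable {α β E : Type*}

noncomputable def fiberSum [AddCommMonoid E] [TopologicalSpace E] (g : α → β) (a : α → E)
    (y : β) : E :=
  ∑' x : {x : α // g x = y}, a x

theorem hasSum_fiberSum [AddCommGroup E] [UniformSpace E] [IsUniformAddGroup E] [CompleteSpace E]
    [T2Space E] {a : α → E} {t : E} (ha : HasSum a t) (g : α → β) :
    HasSum (fiberSum g a) t :=
  ha.tsum_fiberwise g

theorem summable_norm_fiberSum [NormedAddCommGroup E] {a : α → E}
    (ha : Summable fun x => ‖a x‖) (g : α → β) :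
    Summable fun y => ‖fiberSum g a y‖ :=
  (hasSum_fiberSum ha.hasSum g).summable.of_nonneg_of_le (fun _ => norm_nonneg _)
    fun _ => norm_tsum_le_tsum_norm (ha.subtype _)

theorem fiberSum_mul (g : α → β) (a : α → ℂ) (f : β → ℂ) (y : β) :
    fiberSum g a y * f y = fiberSum g (fun x => a x * f (g x)) y := by
  rw [fiberSum, ← tsum_mul_right]
  exact tsum_congr fun x => by dsimp only; rw [x.2]

theorem tsum_fiberSum_mul {g : α → β} {a : α → ℂ} {f : β → ℂ}
    (h : Summable fun x => a x * f (g x)) :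
    ∑' y, fiberSum g a y * f y = ∑' x, a x * f (g x) := by
  simp_rw [fiberSum_mul]
  exact (hasSum_fiberSum h.hasSum g).tsum_eq

end FiberSum

section Pairing

variable {α X : Type*} [TopologicalSpace X] [CompactSpace X]

theorem norm_mul_apply_le (c : ℂ) (f : C(X, ℂ)) (y : X) : ‖c * f y‖ ≤ ‖c‖ * ‖f‖ := by
  rw [norm_mul]
  exact mul_le_mul_of_nonneg_left (f.norm_coe_le_norm y) (norm_nonneg c)

theorem summable_mul_comp {a : α → ℂ} (ha : Summable fun x => ‖a x‖) (f : C(X, ℂ))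
    (g : α → X) : Summable fun x => a x * f (g x) :=
  .of_norm_bounded (ha.mul_right ‖f‖) fun x => norm_mul_apply_le (a x) f (g x)

theorem continuous_tsum_mul_comp {a : α → ℂ} (ha : Summable fun x => ‖a x‖) (f : C(X, ℂ)) :
    Continuous fun g : α → X => ∑' x, a x * f (g x) :=
  continuous_tsum (fun x => continuous_const.mul (f.continuous.comp (continuous_apply x)))
    (ha.mul_right ‖f‖) fun x g => norm_mul_apply_le (a x) f (g x)

end Pairing

section WeakTopology

variable {α X : Type*}

noncomputable def pushforward (g : α → X) (a : L1 α) : L1 X :=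
  ⟨fiberSum g a, summable_norm_fiberSum a.2 g⟩

theorem continuous_pushforward [TopologicalSpace X] [CompactSpace X] (a : L1 α) :
    Continuous[_, ell1WeakTop X] fun g : α → X => pushforward g a := by
  refine continuous_induced_rng.2 (continuous_pi fun f => ?_)
  have hpair : ∀ g : α → X, ∑' y, fiberSum g a y * f y = ∑' x, (a : α → ℂ) x * f (g x) :=
    fun g => tsum_fiberSum_mul (summable_mul_comp a.2 f g)
  simpa only [Function.comp_def, pushforward, hpair] using continuous_tsum_mul_comp a.2 f

theorem isCompact_range_pushforward [TopologicalSpace X] [CompactSpace X] (a : L1 α) :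
    @IsCompact (L1 X) (ell1WeakTop X) (range fun g : α → X => pushforward g a) :=
  letI := ell1WeakTop X
  isCompact_range (continuous_pushforward a)

end WeakTopology

/-- For a topological dynamical system `(K;S)`, each `s ∈ S`
induces an adjoint operator on `ℓ¹(K)` given by summation over fibres, which
satisfies `⟨f, T_s'a⟩ = ∑_x a x f (s x)`; moreover every orbit
`{T_s'a : s ∈ S}` is relatively compact in the `σ(ℓ¹(K), C(K))`-topology. -/
theorem ell1_adjoint_orbit_compact (a : L1 K) :
    (∀ s : S,
      (Summable fun x => ‖adjAt s (a : K → ℂ) x‖) ∧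
      ∀ f : C(K, ℂ),
        ∑' x : K, adjAt s (a : K → ℂ) x * f x = ∑' x : K, (a : K → ℂ) x * f (s • x)) ∧
    @IsCompact (L1 K) (ell1WeakTop K)
      (@closure (L1 K) (ell1WeakTop K)
        {b : L1 K | ∃ s : S, ∀ x : K, (b : K → ℂ) x = adjAt s (a : K → ℂ) x}) := by
  refine ⟨fun s => ⟨summable_norm_fiberSum a.2 (s • ·),
    fun f => tsum_fiberSum_mul (summable_mul_comp a.2 f (s • ·))⟩, ?_⟩
  let := ell1WeakTop K
  have : R1Space (L1 K) := R1Space.induced _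
  refine (isCompact_range_pushforward a).closure_of_subset ?_
  rintro b ⟨s, hb⟩
  exact ⟨(s • ·), Subtype.ext (funext fun x => (hb x).symm)⟩

end Stmt13
end

section
/- Let (K;S) be a weakly almost periodic topological dynamical system, i.e., for each f ∈ C(K) the orbit 𝒯_S f = {f∘s : s ∈ S} is relatively compact in the weak topology of the Banach space C(K). Then for every R ∈ K(K;S) and every x ∈ K the measure Rδ_x is a Dirac measure δ_{r_R(x)}, and the map K(K;S) → E(K;S), R ↦ r_R, is a multiplicative homeomorphism of compact right topological semigroups (an isomorphism). -/
/-!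
Fix an ultrafilter `u` on `S`. Since `K` is compact, the maps `x ↦ s • x` converge pointwise
along `u` to some `ψ : K → K`, and weak almost periodicity makes each orbit `s ↦ T_s f` converge
weakly along `u` to some `g_f ∈ C(K)`. Testing against Dirac measures gives `g_f = f ∘ ψ`; hence
`ψ` is continuous (`K` is completely regular) and `T_s'` converges pointwise weak* to the adjoint
of `f ↦ f ∘ ψ`. Every point of the closures defining `E(K;S)` and `K(K;S)` is a limit along some
ultrafilter on `S`, so `K(K;S)` consists exactly of the adjoints of the Koopman operators of the
elements of `E(K;S)`, all of which are continuous. This makes `R ↦ r_R` a bijection; it is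
continuous by testing against Dirac measures, and its inverse is continuous because `K(K;S)` is
compact by Banach–Alaoglu while `K^K` is Hausdorff.
-/

open Filter Topology Set

namespace Stmt14

variable {K : Type*} [TopologicalSpace K] [CompactSpace K] [T2Space K]
variable {S : Type*} [Semigroup S] [TopologicalSpace S] [SMul S K]
  [IsScalarTower S S K] [ContinuousSMul S K]

/-- The Koopman operator of `s ∈ S` on `C(K, ℂ)`. -/
noncomputable def koopman (s : S) : C(K, ℂ) →L[ℂ] C(K, ℂ) where
  toFun f := f.comp ⟨fun x => s • x, continuous_const.smul continuous_id⟩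
  map_add' f g := by ext x; rfl
  map_smul' c f := by ext x; rfl
  cont := ContinuousMap.continuous_precomp _

/-- The adjoint Koopman operator on the dual `C(K)'`. -/
noncomputable def koopmanDual (s : S) :
    (C(K, ℂ) →L[ℂ] ℂ) → (C(K, ℂ) →L[ℂ] ℂ) :=
  fun μ => μ.comp (koopman s)

/-- The Dirac functional at `x ∈ K`. -/
noncomputable def dirac (x : K) : C(K, ℂ) →L[ℂ] ℂ :=
  ContinuousMap.evalCLM ℂ x

/-- The weak topology `σ(C(K), C(K)')` on `C(K, ℂ)`. -/
noncomputable def sigmaC (K : Type*) [TopologicalSpace K] [CompactSpace K] :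
    TopologicalSpace C(K, ℂ) :=
  TopologicalSpace.induced (fun f (φ : C(K, ℂ) →L[ℂ] ℂ) => φ f) inferInstance

/-- The weak* topology on `C(K)'`. -/
noncomputable def wstarTop (K : Type*) [TopologicalSpace K] [CompactSpace K] :
    TopologicalSpace (C(K, ℂ) →L[ℂ] ℂ) :=
  TopologicalSpace.induced (fun μ (f : C(K, ℂ)) => μ f) inferInstance

/-- The topology of pointwise weak* convergence on maps `C(K)' → C(K)'`. -/
noncomputable def piWstar (K : Type*) [TopologicalSpace K] [CompactSpace K] :
    TopologicalSpace ((C(K, ℂ) →L[ℂ] ℂ) → (C(K, ℂ) →L[ℂ] ℂ)) :=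
  @Pi.topologicalSpace _ _ (fun _ => wstarTop K)

/-- The Köhler semigroup `K(K;S)`: the closure of `𝒯_S'` in `(C(K)')^(C(K)')`
with the topology of pointwise weak* convergence. -/
noncomputable def KohlerDS (K : Type*) [TopologicalSpace K] [CompactSpace K]
    (S : Type*) [Semigroup S] [TopologicalSpace S] [SMul S K] [IsScalarTower S S K]
    [ContinuousSMul S K] : Set ((C(K, ℂ) →L[ℂ] ℂ) → (C(K, ℂ) →L[ℂ] ℂ)) :=
  @closure _ (piWstar K) (range (koopmanDual (K := K) (S := S)))

/-- The Ellis semigroup `E(K;S)`. -/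
def Ellis (K : Type*) [TopologicalSpace K] (S : Type*) [SMul S K] : Set (K → K) :=
  closure (range fun s : S => fun x : K => s • x)

theorem _root_.exists_ultrafilter_tendsto_of_mem_closure_range {X ι : Type*}
    [TopologicalSpace X] {j : ι → X} {x : X} (hx : x ∈ closure (range j)) :
    ∃ u : Ultrafilter ι, Tendsto j u (𝓝 x) := by
  have : (comap j (𝓝 x)).NeBot := comap_neBot_iff.2 fun t ht => by
    obtain ⟨_, hyt, i, rfl⟩ := mem_closure_iff_nhds.1 hx t ht
    exact ⟨i, hyt⟩
  exact ⟨Ultrafilter.of _, tendsto_iff_comap.2 (Ultrafilter.of_le _)⟩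

theorem _root_.continuous_of_forall_continuous_comp {X Y 𝕜 : Type*} [TopologicalSpace X]
    [TopologicalSpace Y] [CompletelyRegularSpace Y] [RCLike 𝕜] {ψ : X → Y}
    (h : ∀ f : C(Y, 𝕜), Continuous (f ∘ ψ)) : Continuous ψ := by
  refine continuous_def.2 fun U hU => isOpen_iff_mem_nhds.2 fun x hx => ?_
  obtain ⟨f, hfc, hfx, hfU⟩ := CompletelyRegularSpace.completely_regular_isOpen _ U hU hx
  let g : C(Y, 𝕜) :=
    ⟨fun y => ((f y : ℝ) : 𝕜), RCLike.continuous_ofReal.comp (continuous_subtype_val.comp hfc)⟩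
  refine Filter.mem_of_superset ((h g).continuousAt.preimage_mem_nhds
    (Metric.ball_mem_nhds _ one_pos)) fun z hz => ?_
  by_contra hzU
  have hgx : g (ψ x) = 0 := by simp [g, hfx]
  have hgz : g (ψ z) = 1 := by simp [g, hfU hzU]
  simp [hgx, hgz] at hz

theorem _root_.Set.BijOn.continuousOn_invFunOn {X Y : Type*} [TopologicalSpace X]
    [TopologicalSpace Y] [T2Space Y] [Nonempty X] {f : X → Y} {s : Set X} {t : Set Y}
    (hf : BijOn f s t) (hs : IsCompact s) (hfc : ContinuousOn f s) :
    ContinuousOn (Function.invFunOn f s) t := by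
  refine continuousOn_iff_isClosed.2 fun C hC =>
    ⟨f '' (C ∩ s), ((hs.inter_left hC).image_of_continuousOn
      (hfc.mono inter_subset_right)).isClosed, ?_⟩
  ext y
  constructor
  · rintro ⟨hyC, hyt⟩
    exact ⟨⟨_, ⟨hyC, hf.surjOn.mapsTo_invFunOn hyt⟩, hf.surjOn.rightInvOn_invFunOn hyt⟩, hyt⟩
  · rintro ⟨⟨x, ⟨hxC, hxs⟩, rfl⟩, hyt⟩
    exact ⟨by rwa [mem_preimage, hf.injOn.leftInvOn_invFunOn hxs], hyt⟩

section Koopman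

variable {X M : Type*} [TopologicalSpace X] [TopologicalSpace M] [SMul M X] [ContinuousSMul M X]

noncomputable def compDual (φ : C(X, X)) (μ : C(X, ℂ) →L[ℂ] ℂ) : C(X, ℂ) →L[ℂ] ℂ :=
  μ.comp
    ({ toFun := fun f => f.comp φ
       map_add' _ _ := rfl
       map_smul' _ _ := rfl
       cont := ContinuousMap.continuous_precomp φ } : C(X, ℂ) →L[ℂ] C(X, ℂ))

theorem compDual_dirac (φ : C(X, X)) (x : X) : compDual φ (dirac x) = dirac (φ x) := rfl

theorem koopmanDual_comp_koopmanDual [Semigroup M] [IsScalarTower M M X] (s t : M) :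
    koopmanDual (K := X) s ∘ koopmanDual t = koopmanDual (s * t) := by
  funext μ
  ext f
  show μ (koopman t (koopman s f)) = μ (koopman (s * t) f)
  congr 1
  ext x
  show f (s • t • x) = f ((s * t) • x)
  rw [← smul_eq_mul, smul_assoc]

variable [CompactSpace X]

theorem tendsto_sigmaC_iff {α : Type*} {l : Filter α} {F : α → C(X, ℂ)} {g : C(X, ℂ)} :
    Tendsto F l (@nhds _ (sigmaC X) g) ↔
      ∀ μ : C(X, ℂ) →L[ℂ] ℂ, Tendsto (fun i => μ (F i)) l (𝓝 (μ g)) := by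
  rw [sigmaC, nhds_induced, tendsto_comap_iff, tendsto_pi_nhds]
  rfl

theorem tendsto_wstar_iff {α : Type*} {l : Filter α} {F : α → C(X, ℂ) →L[ℂ] ℂ}
    {μ : C(X, ℂ) →L[ℂ] ℂ} :
    Tendsto F l (@nhds _ (wstarTop X) μ) ↔
      ∀ f : C(X, ℂ), Tendsto (fun i => F i f) l (𝓝 (μ f)) := by
  rw [wstarTop, nhds_induced, tendsto_comap_iff, tendsto_pi_nhds]
  rfl

theorem tendsto_piWstar_iff {α : Type*} {l : Filter α}
    {F : α → (C(X, ℂ) →L[ℂ] ℂ) → (C(X, ℂ) →L[ℂ] ℂ)}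
    {R : (C(X, ℂ) →L[ℂ] ℂ) → (C(X, ℂ) →L[ℂ] ℂ)} :
    Tendsto F l (@nhds _ (piWstar X) R) ↔
      ∀ μ f, Tendsto (fun i => F i μ f) l (𝓝 (R μ f)) := by
  let := wstarTop X
  exact tendsto_pi_nhds.trans (forall_congr' fun _ => tendsto_wstar_iff)

theorem continuous_wstar_eval (f : C(X, ℂ)) :
    @Continuous _ _ (wstarTop X) _ fun μ : C(X, ℂ) →L[ℂ] ℂ => μ f := by
  let := wstarTop X
  exact (continuous_apply f).comp continuous_induced_dom

theorem continuous_piWstar_comp_left {T : (C(X, ℂ) →L[ℂ] ℂ) → (C(X, ℂ) →L[ℂ] ℂ)}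
    (hT : @Continuous _ _ (wstarTop X) (wstarTop X) T) :
    @Continuous _ _ (piWstar X) (piWstar X) (T ∘ ·) := by
  let := wstarTop X
  exact continuous_pi fun μ => hT.comp (continuous_apply μ)

theorem continuous_piWstar_comp_right (G : (C(X, ℂ) →L[ℂ] ℂ) → (C(X, ℂ) →L[ℂ] ℂ)) :
    @Continuous _ _ (piWstar X) (piWstar X) (· ∘ G) := by
  let := wstarTop X
  exact continuous_pi fun μ => continuous_apply (G μ)

theorem t2Space_wstar : @T2Space _ (wstarTop X) :=
  (inferInstance : T2Space (WeakDual ℂ C(X, ℂ)))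

theorem t2Space_piWstar : @T2Space _ (piWstar X) :=
  let := wstarTop X
  have := t2Space_wstar (X := X)
  Pi.t2Space

theorem isCompact_wstar_closedBall (r : ℝ) :
    @IsCompact _ (wstarTop X) (Metric.closedBall (0 : C(X, ℂ) →L[ℂ] ℂ) r) :=
  WeakDual.isCompact_closedBall 0 r

theorem continuous_dirac : @Continuous _ _ _ (wstarTop X) (dirac : X → C(X, ℂ) →L[ℂ] ℂ) :=
  continuous_induced_rng.2 <| continuous_pi fun f => f.continuous

theorem continuous_koopmanDual (s : M) :
    @Continuous _ _ (wstarTop X) (wstarTop X) (koopmanDual (K := X) s) := by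
  let := wstarTop X
  exact continuous_induced_rng.2 <| continuous_pi fun f => continuous_wstar_eval (koopman s f)

theorem norm_koopmanDual_apply_le (s : M) (μ : C(X, ℂ) →L[ℂ] ℂ) :
    ‖koopmanDual s μ‖ ≤ ‖μ‖ := by
  refine ContinuousLinearMap.opNorm_le_bound _ (norm_nonneg μ) fun f => ?_
  have hf : ‖koopman s f‖ ≤ ‖f‖ :=
    (ContinuousMap.norm_le _ (norm_nonneg f)).2 fun x => f.norm_coe_le_norm (s • x)
  calc ‖μ (koopman s f)‖ ≤ ‖μ‖ * ‖koopman s f‖ := μ.le_opNorm _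
    _ ≤ ‖μ‖ * ‖f‖ := by gcongr

theorem eq_comp_of_tendsto_koopman {u : Ultrafilter M} {ψ : X → X}
    (hψ : Tendsto (fun s (x : X) => s • x) (u : Filter M) (𝓝 ψ)) {f g : C(X, ℂ)}
    (hg : Tendsto (fun s => koopman s f) (u : Filter M) (@nhds _ (sigmaC X) g)) :
    ⇑g = f ∘ ψ :=
  funext fun x => tendsto_nhds_unique (tendsto_sigmaC_iff.1 hg (dirac x))
    ((f.continuous.tendsto _).comp (tendsto_pi_nhds.1 hψ x))

variable (X M) in
def WeaklyAlmostPeriodic : Prop :=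
  ∀ f : C(X, ℂ), @IsCompact _ (sigmaC X) (@closure _ (sigmaC X) (range fun s : M => koopman s f))

theorem WeaklyAlmostPeriodic.exists_tendsto_koopman (hwap : WeaklyAlmostPeriodic X M)
    (u : Ultrafilter M) (f : C(X, ℂ)) :
    ∃ g, Tendsto (fun s => koopman s f) (u : Filter M) (@nhds _ (sigmaC X) g) := by
  let := sigmaC X
  obtain ⟨g, -, hg⟩ := (hwap f).ultrafilter_le_nhds (u.map fun s => koopman s f)
    (le_principal_iff.2 <| mem_map.2 <| univ_mem' fun s => subset_closure ⟨s, rfl⟩)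
  exact ⟨g, hg⟩

theorem WeaklyAlmostPeriodic.exists_tendsto_compDual [T2Space X]
    (hwap : WeaklyAlmostPeriodic X M) (u : Ultrafilter M) :
    ∃ φ : C(X, X), Tendsto (fun s (x : X) => s • x) (u : Filter M) (𝓝 ⇑φ) ∧
      Tendsto koopmanDual (u : Filter M) (@nhds _ (piWstar X) (compDual φ)) := by
  obtain ⟨ψ, -, hψ⟩ := isCompact_univ.ultrafilter_le_nhds (u.map fun s (x : X) => s • x)
    (le_principal_iff.2 univ_mem)
  choose g hg using hwap.exists_tendsto_koopman u
  have hgψ (f : C(X, ℂ)) : ⇑(g f) = f ∘ ψ := eq_comp_of_tendsto_koopman hψ (hg f)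
  have hψc : Continuous ψ :=
    continuous_of_forall_continuous_comp fun f => hgψ f ▸ (g f).continuous
  refine ⟨⟨ψ, hψc⟩, hψ, tendsto_piWstar_iff.2 fun μ f => ?_⟩
  have hgf : g f = f.comp ⟨ψ, hψc⟩ := ContinuousMap.ext (congrFun (hgψ f))
  have hlim := tendsto_sigmaC_iff.1 (hg f) μ
  rw [hgf] at hlim
  exact hlim

variable [Semigroup M] [IsScalarTower M M X]

theorem comp_mem_kohlerDS {R R' : (C(X, ℂ) →L[ℂ] ℂ) → (C(X, ℂ) →L[ℂ] ℂ)}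
    (hR : R ∈ KohlerDS X M) (hR' : R' ∈ KohlerDS X M) : R ∘ R' ∈ KohlerDS X M := by
  let := piWstar X
  have hleft (s : M) : koopmanDual s ∘ R' ∈ KohlerDS X M :=
    map_mem_closure (continuous_piWstar_comp_left (continuous_koopmanDual s)) hR'
      (by rintro _ ⟨t, rfl⟩; exact ⟨s * t, (koopmanDual_comp_koopmanDual s t).symm⟩)
  have := map_mem_closure (continuous_piWstar_comp_right R') hR
    (t := KohlerDS X M) (by rintro _ ⟨s, rfl⟩; exact hleft s)
  rwa [KohlerDS, closure_closure] at this

theorem isCompact_kohlerDS : @IsCompact _ (piWstar X) (KohlerDS X M) := by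
  let := wstarTop X
  let := piWstar X
  have := t2Space_piWstar (X := X)
  have hballs : IsCompact
      (univ.pi fun μ : C(X, ℂ) →L[ℂ] ℂ => Metric.closedBall (0 : C(X, ℂ) →L[ℂ] ℂ) ‖μ‖) :=
    isCompact_univ_pi fun μ => isCompact_wstar_closedBall ‖μ‖
  show IsCompact (closure _)
  refine hballs.of_isClosed_subset isClosed_closure (closure_minimal ?_ hballs.isClosed)
  rintro _ ⟨s, rfl⟩ μ -
  exact mem_closedBall_zero_iff.2 (norm_koopmanDual_apply_le s μ)

end Koopman

open Classical in
/-- The map `r_R` of the paper; the value `x` is a placeholder for points where `R δ_x` is not a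
Dirac measure. -/
noncomputable def pointMap (R : (C(K, ℂ) →L[ℂ] ℂ) → (C(K, ℂ) →L[ℂ] ℂ)) (x : K) : K :=
  if h : ∃ y, R (dirac x) = dirac y then h.choose else x

theorem dirac_injective : Function.Injective (dirac : K → C(K, ℂ) →L[ℂ] ℂ) := fun _ _ h =>
  (WeakDual.CharacterSpace.continuousMapEval_bijective K ℂ).injective <|
    Subtype.ext <| ContinuousLinearMap.ext fun f => DFunLike.congr_fun h f

theorem pointMap_eq {R : (C(K, ℂ) →L[ℂ] ℂ) → (C(K, ℂ) →L[ℂ] ℂ)} {x y : K}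
    (h : R (dirac x) = dirac y) : pointMap R x = y := by
  have hex : ∃ y, R (dirac x) = dirac y := ⟨y, h⟩
  rw [pointMap, dif_pos hex]
  exact dirac_injective (hex.choose_spec.symm.trans h)

theorem pointMap_compDual (φ : C(K, K)) : pointMap (compDual φ) = φ :=
  funext fun x => pointMap_eq (compDual_dirac φ x)

theorem pointMap_comp {R R' : (C(K, ℂ) →L[ℂ] ℂ) → (C(K, ℂ) →L[ℂ] ℂ)}
    (hR : ∀ x, R (dirac x) = dirac (pointMap R x))
    (hR' : ∀ x, R' (dirac x) = dirac (pointMap R' x)) :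
    pointMap (R ∘ R') = pointMap R ∘ pointMap R' :=
  funext fun x => pointMap_eq <| by rw [Function.comp_apply, hR', hR, Function.comp_apply]

theorem continuousOn_pointMap {A : Set ((C(K, ℂ) →L[ℂ] ℂ) → (C(K, ℂ) →L[ℂ] ℂ))}
    (hA : ∀ R ∈ A, ∀ x, R (dirac x) = dirac (pointMap R x)) :
    @ContinuousOn _ _ (piWstar K) _ pointMap A := by
  let := wstarTop K
  let := piWstar K
  have := t2Space_wstar (X := K)
  have hdirac : Topology.IsInducing (dirac : K → C(K, ℂ) →L[ℂ] ℂ) :=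
    (continuous_dirac.isClosedEmbedding dirac_injective).isInducing
  refine continuousOn_pi.2 fun x => hdirac.continuousOn_iff.2 ?_
  exact (continuous_apply (dirac x)).continuousOn.congr fun R hR => (hA R hR x).symm

namespace WeaklyAlmostPeriodic

theorem exists_eq_compDual (hwap : WeaklyAlmostPeriodic K S)
    {R : (C(K, ℂ) →L[ℂ] ℂ) → (C(K, ℂ) →L[ℂ] ℂ)} (hR : R ∈ KohlerDS K S) :
    ∃ φ : C(K, K), ⇑φ ∈ Ellis K S ∧ R = compDual φ := by
  let := piWstar K
  have := t2Space_piWstar (X := K)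
  obtain ⟨u, hu⟩ := exists_ultrafilter_tendsto_of_mem_closure_range hR
  obtain ⟨φ, hφ, hφ'⟩ := hwap.exists_tendsto_compDual u
  exact ⟨φ, mem_closure_of_tendsto hφ (.of_forall mem_range_self), tendsto_nhds_unique hu hφ'⟩

theorem exists_compDual_mem_kohlerDS (hwap : WeaklyAlmostPeriodic K S) {ψ : K → K}
    (hψ : ψ ∈ Ellis K S) : ∃ φ : C(K, K), ⇑φ = ψ ∧ compDual φ ∈ KohlerDS K S := by
  obtain ⟨u, hu⟩ := exists_ultrafilter_tendsto_of_mem_closure_range hψ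
  obtain ⟨φ, hφ, hφ'⟩ := hwap.exists_tendsto_compDual u
  let := piWstar K
  exact ⟨φ, tendsto_nhds_unique hφ hu, mem_closure_of_tendsto hφ' (.of_forall mem_range_self)⟩

theorem dirac_pointMap (hwap : WeaklyAlmostPeriodic K S)
    {R : (C(K, ℂ) →L[ℂ] ℂ) → (C(K, ℂ) →L[ℂ] ℂ)} (hR : R ∈ KohlerDS K S) (x : K) :
    R (dirac x) = dirac (pointMap R x) := by
  obtain ⟨φ, -, rfl⟩ := hwap.exists_eq_compDual hR
  rw [pointMap_compDual, compDual_dirac]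

theorem bijOn_pointMap (hwap : WeaklyAlmostPeriodic K S) :
    BijOn pointMap (KohlerDS K S) (Ellis K S) := by
  refine ⟨fun R hR => ?_, fun R hR R' hR' h => ?_, fun ψ hψ => ?_⟩
  · obtain ⟨φ, hφ, rfl⟩ := hwap.exists_eq_compDual hR
    rwa [pointMap_compDual]
  · obtain ⟨φ, -, rfl⟩ := hwap.exists_eq_compDual hR
    obtain ⟨φ', -, rfl⟩ := hwap.exists_eq_compDual hR'
    rw [pointMap_compDual, pointMap_compDual] at h
    rw [DFunLike.coe_injective h]
  · obtain ⟨φ, rfl, hφ⟩ := hwap.exists_compDual_mem_kohlerDS hψ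
    exact ⟨_, hφ, pointMap_compDual φ⟩

theorem continuousOn_invFunOn_pointMap (hwap : WeaklyAlmostPeriodic K S) :
    @ContinuousOn _ _ _ (piWstar K) (Function.invFunOn pointMap (KohlerDS K S)) (Ellis K S) := by
  let := piWstar K
  exact hwap.bijOn_pointMap.continuousOn_invFunOn isCompact_kohlerDS
    (continuousOn_pointMap fun _ hR => hwap.dirac_pointMap hR)

end WeaklyAlmostPeriodic

theorem wap_kohler_iso_ellis_general
    (hwap : ∀ f : C(K, ℂ), @IsCompact _ (sigmaC K)
      (@closure _ (sigmaC K) (range fun s : S => koopman s f))) :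
    ∃ ρ : ((C(K, ℂ) →L[ℂ] ℂ) → (C(K, ℂ) →L[ℂ] ℂ)) → (K → K),
      (∀ R ∈ KohlerDS K S, ∀ x : K, R (dirac x) = dirac (ρ R x)) ∧
      (∀ R ∈ KohlerDS K S, ρ R ∈ Ellis K S) ∧
      (∀ ψ ∈ Ellis K S, ∃ R ∈ KohlerDS K S, ρ R = ψ) ∧
      (∀ R ∈ KohlerDS K S, ∀ R' ∈ KohlerDS K S,
        (R ∘ R' ∈ KohlerDS K S) ∧ ρ (R ∘ R') = ρ R ∘ ρ R') ∧
      (Set.InjOn ρ (KohlerDS K S)) ∧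
      @ContinuousOn _ _ (piWstar K) _ ρ (KohlerDS K S) ∧
      (∃ σ : (K → K) → ((C(K, ℂ) →L[ℂ] ℂ) → (C(K, ℂ) →L[ℂ] ℂ)),
        @ContinuousOn _ _ _ (piWstar K) σ (Ellis K S) ∧
        (∀ ψ ∈ Ellis K S, σ ψ ∈ KohlerDS K S ∧ ρ (σ ψ) = ψ) ∧
        ∀ R ∈ KohlerDS K S, σ (ρ R) = R) := by
  have hwap : WeaklyAlmostPeriodic K S := hwap
  have hbij := hwap.bijOn_pointMap
  have hdirac : ∀ R ∈ KohlerDS K S, ∀ x, R (dirac x) = dirac (pointMap R x) :=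
    fun _ hR => hwap.dirac_pointMap hR
  refine ⟨pointMap, hdirac, fun _ hR => hbij.mapsTo hR, fun _ hψ => hbij.surjOn hψ,
    fun R hR R' hR' => ⟨comp_mem_kohlerDS hR hR', pointMap_comp (hdirac R hR) (hdirac R' hR')⟩,
    hbij.injOn, continuousOn_pointMap hdirac, Function.invFunOn pointMap (KohlerDS K S),
    hwap.continuousOn_invFunOn_pointMap, fun _ hψ => ⟨hbij.surjOn.mapsTo_invFunOn hψ,
      hbij.surjOn.rightInvOn_invFunOn hψ⟩, fun _ hR => hbij.injOn.leftInvOn_invFunOn hR⟩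

/-- For a weakly almost periodic system `(K;S)`, every
element of the Köhler semigroup maps Dirac measures to Dirac measures, and the
induced restriction map is an isomorphism of compact right topological
semigroups from `K(K;S)` onto the Ellis semigroup `E(K;S)`. -/
theorem wap_kohler_iso_ellis
    (hleftc : ∀ s : S, Continuous fun t : S => s * t)
    (hrightc : ∀ s : S, Continuous fun t : S => t * s)
    (hwap : ∀ f : C(K, ℂ), @IsCompact _ (sigmaC K)
      (@closure _ (sigmaC K) (range fun s : S => koopman s f))) :
    ∃ ρ : ((C(K, ℂ) →L[ℂ] ℂ) → (C(K, ℂ) →L[ℂ] ℂ)) → (K → K),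
      (∀ R ∈ KohlerDS K S, ∀ x : K, R (dirac x) = dirac (ρ R x)) ∧
      (∀ R ∈ KohlerDS K S, ρ R ∈ Ellis K S) ∧
      (∀ ψ ∈ Ellis K S, ∃ R ∈ KohlerDS K S, ρ R = ψ) ∧
      (∀ R ∈ KohlerDS K S, ∀ R' ∈ KohlerDS K S,
        (R ∘ R' ∈ KohlerDS K S) ∧ ρ (R ∘ R') = ρ R ∘ ρ R') ∧
      (Set.InjOn ρ (KohlerDS K S)) ∧
      @ContinuousOn _ _ (piWstar K) _ ρ (KohlerDS K S) ∧
      (∃ σ : (K → K) → ((C(K, ℂ) →L[ℂ] ℂ) → (C(K, ℂ) →L[ℂ] ℂ)),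
        @ContinuousOn _ _ _ (piWstar K) σ (Ellis K S) ∧
        (∀ ψ ∈ Ellis K S, σ ψ ∈ KohlerDS K S ∧ ρ (σ ψ) = ψ) ∧
        ∀ R ∈ KohlerDS K S, σ (ρ R) = R) :=
  wap_kohler_iso_ellis_general hwap

end Stmt14
end

section
/- Let X be a Hausdorff locally convex space and 𝒮 ⊆ L(X) a subsemigroup that is left amenable for the topology of pointwise convergence and has relatively compact convex orbits, i.e., {Tx : T ∈ co 𝒮} is relatively compact in X for every x ∈ X. Then the kernel of K(co 𝒮) is nonempty and satisfies ker(K(co 𝒮)) = {Q ∈ K(co 𝒮) : T∘Q = Q for all T ∈ 𝒮} = {Q ∈ K(co 𝒮) : Q is a right zero of K(co 𝒮)}. -/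
/-!
By Tychonoff, `K(co 𝒮)` is a compact convex subset of `X^X`. A left invariant mean `m` on `𝒮`
has a barycenter `q ∈ K(co 𝒮)`, i.e. `φ q = m (φ|𝒮)` for every continuous functional `φ` on
`X^X`: by compactness it suffices to treat finitely many `φ` at a time, and if the vector of their
means missed the (compact convex) image of `K(co 𝒮)` in `ℝⁿ`, a separating functional would
contradict `m F ≤ sup F`. Taking `φ R = ℓ (R x)` and `φ R = ℓ (T (R x))`, left invariance gives
`ℓ (T (q x)) = ℓ (q x)`, so `T ∘ q = q` for `T ∈ 𝒮` since `X*` separates points. As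
`{R : R ∘ Q = Q}` is closed and convex, every `Q` fixed by `𝒮` is a right zero of `K(co 𝒮)`; and
in a semigroup with a right zero, the right zeros form an ideal contained in every ideal.
-/

open Filter Topology Set

namespace Stmt16

variable {X : Type*} [AddCommGroup X] [Module ℂ X] [TopologicalSpace X]
  [IsTopologicalAddGroup X] [ContinuousSMul ℂ X] [T2Space X] [LocallyConvexSpace ℝ X]

/-- The underlying functions of a set of continuous linear operators. -/
def carrier (S : Set (X →L[ℂ] X)) : Set (X → X) :=
  (fun T : X →L[ℂ] X => (T : X → X)) '' S

/-- The convex hull `co 𝒮` of the operator set, taken inside `X → X`. -/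
noncomputable def convS (S : Set (X →L[ℂ] X)) : Set (X → X) :=
  convexHull ℝ (carrier S)

/-- The Köhler semigroup `K(co 𝒮)`: the closure of `co 𝒮` in `X → X` with the
topology of pointwise convergence. -/
noncomputable def KohlerConv (S : Set (X →L[ℂ] X)) : Set (X → X) :=
  closure (convS S)

/-- Left amenability of a set of maps `A ⊆ X → X`, viewed as a semigroup under
composition with the topology of pointwise convergence. -/
def IsLeftAmenableSet (A : Set (X → X)) : Prop :=
  ∃ m : BoundedContinuousFunction A ℝ →ₗ[ℝ] ℝ,
    (∀ f : BoundedContinuousFunction A ℝ, (∀ t, 0 ≤ f t) → 0 ≤ m f) ∧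
    m 1 = 1 ∧
    ∀ (s : A) (f g : BoundedContinuousFunction A ℝ),
      (∀ (t : A) (h : (s : X → X) ∘ (t : X → X) ∈ A),
        g t = f ⟨(s : X → X) ∘ (t : X → X), h⟩) →
      m g = m f

/-- `I` is a (two-sided) ideal of the semigroup `G ⊆ X → X` under composition:
a nonempty subset of `G` with `G ∘ I ⊆ I` and `I ∘ G ⊆ I`. -/
def IsIdealOf (G I : Set (X → X)) : Prop :=
  I.Nonempty ∧ I ⊆ G ∧ ∀ a ∈ G, ∀ b ∈ I, a ∘ b ∈ I ∧ b ∘ a ∈ I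

/-- The kernel of a semigroup `G ⊆ X → X`: the intersection of all its ideals. -/
def semigroupKernel (G : Set (X → X)) : Set (X → X) :=
  ⋂₀ {I | IsIdealOf G I}

/-- `Q` is a right zero of `A ⊆ X → X` with respect to composition. -/
def IsRightZeroIn (A : Set (X → X)) (Q : X → X) : Prop :=
  Q ∈ A ∧ ∀ R ∈ A, R ∘ Q = Q

end Stmt16

open scoped BoundedContinuousFunction

section Barycenter

variable {V : Type*} [AddCommGroup V] [Module ℝ V] [TopologicalSpace V] {K : Set V}

theorem exists_mem_forall_mem_finset_dual_eq (hK : IsCompact K) (hKc : Convex ℝ K)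
    (μ : StrongDual ℝ V →ₗ[ℝ] ℝ) (hμ : ∀ φ r, (∀ v ∈ K, φ v ≤ r) → μ φ ≤ r)
    (u : Finset (StrongDual ℝ V)) :
    ∃ q ∈ K, ∀ φ ∈ u, φ q = μ φ := by
  classical
  let Φ : V →L[ℝ] (u → ℝ) := ContinuousLinearMap.pi fun φ : u => (φ : StrongDual ℝ V)
  let c : u → ℝ := fun φ => μ φ
  suffices hc : c ∈ Φ '' K by
    obtain ⟨q, hqK, hq⟩ := hc
    exact ⟨q, hqK, fun φ hφ => congrFun hq ⟨φ, hφ⟩⟩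
  by_contra hc
  obtain ⟨f, r, hfK, hrc⟩ := geometric_hahn_banach_closed_point
    (hKc.linear_image Φ.toLinearMap) (hK.image Φ.continuous).isClosed hc
  -- `f ∘ Φ` is a combination of the functionals in `u`, so `μ` sends it to `f c`.
  let e : u → u → ℝ := fun φ ψ => if φ = ψ then 1 else 0
  have hf : ∀ w, f w = ∑ φ, w φ * f (e φ) := f.toLinearMap.pi_apply_eq_sum_univ
  have hfΦ : f ∘L Φ = ∑ φ : u, f (e φ) • (φ : StrongDual ℝ V) := by
    ext v
    rw [ContinuousLinearMap.comp_apply, hf]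
    simp [Φ, mul_comm]
  have hμfΦ : μ (f ∘L Φ) = f c := by
    simp [hfΦ, hf c, c, mul_comm]
  have := hμ (f ∘L Φ) r fun v hv => (hfK _ ⟨v, hv, rfl⟩).le
  linarith

theorem exists_mem_forall_dual_eq (hK : IsCompact K) (hKc : Convex ℝ K)
    (μ : StrongDual ℝ V →ₗ[ℝ] ℝ) (hμ : ∀ φ r, (∀ v ∈ K, φ v ≤ r) → μ φ ≤ r) :
    ∃ q ∈ K, ∀ φ : StrongDual ℝ V, φ q = μ φ := by
  obtain ⟨q, hqK, hq⟩ := hK.inter_iInter_nonempty (fun φ : StrongDual ℝ V => {v | φ v = μ φ})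
    (fun φ => isClosed_eq φ.continuous continuous_const) fun u => by
      obtain ⟨q, hqK, hq⟩ := exists_mem_forall_mem_finset_dual_eq hK hKc μ hμ u
      exact ⟨q, hqK, mem_iInter₂.2 hq⟩
  exact ⟨q, hqK, mem_iInter.1 hq⟩

end Barycenter

theorem BoundedContinuousFunction.map_le_of_forall_apply_le {α : Type*} [TopologicalSpace α]
    (m : (α →ᵇ ℝ) →ₗ[ℝ] ℝ) (hpos : ∀ F : α →ᵇ ℝ, (∀ a, 0 ≤ F a) → 0 ≤ m F)
    (hone : m 1 = 1) {F : α →ᵇ ℝ} {r : ℝ} (hF : ∀ a, F a ≤ r) : m F ≤ r := by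
  have := hpos (r • 1 - F) fun a => by simpa using hF a
  rwa [map_sub, map_smul, hone, smul_eq_mul, mul_one, sub_nonneg] at this

noncomputable def restrictDual {V : Type*} [AddCommGroup V] [Module ℝ V] [TopologicalSpace V]
    {A K : Set V} (hK : IsCompact K) (hAK : A ⊆ K) : StrongDual ℝ V →ₗ[ℝ] (A →ᵇ ℝ) where
  toFun φ := .ofNormedAddCommGroup (fun a => φ a) (φ.continuous.comp continuous_subtype_val) _
    fun a => (hK.exists_bound_of_continuousOn φ.continuous.continuousOn).choose_spec a (hAK a.2)
  map_add' _ _ := rfl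
  map_smul' _ _ := rfl

namespace Stmt16

section SemigroupKernel

variable {X : Type*} {G I : Set (X → X)} {Q : X → X}

theorem IsIdealOf.mem_of_isRightZeroIn (hI : IsIdealOf G I) (hQ : IsRightZeroIn G Q) :
    Q ∈ I := by
  obtain ⟨⟨b, hb⟩, hIG, hmul⟩ := hI
  simpa only [hQ.2 b (hIG hb)] using (hmul Q hQ.1 b hb).2

theorem isIdealOf_setOf_isRightZeroIn (hG : ∀ a ∈ G, ∀ b ∈ G, a ∘ b ∈ G)
    (hQ : IsRightZeroIn G Q) : IsIdealOf G {Q | IsRightZeroIn G Q} := by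
  refine ⟨⟨Q, hQ⟩, fun _ hP => hP.1, fun a ha b hb => ⟨?_, ?_⟩⟩
  · change IsRightZeroIn G (a ∘ b)
    rwa [hb.2 a ha]
  · exact ⟨hG b hb.1 a ha, fun R hR => by rw [← Function.comp_assoc, hb.2 R hR]⟩

theorem semigroupKernel_eq_setOf_isRightZeroIn (hG : ∀ a ∈ G, ∀ b ∈ G, a ∘ b ∈ G)
    (hQ : IsRightZeroIn G Q) : semigroupKernel G = {Q | IsRightZeroIn G Q} :=
  (sInter_subset_of_mem (isIdealOf_setOf_isRightZeroIn hG hQ)).antisymm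
    fun _ hP => mem_sInter.2 fun _ hI => hI.mem_of_isRightZeroIn hP

end SemigroupKernel

section KohlerSemigroup

variable {X : Type*} [AddCommGroup X] [Module ℂ X] [TopologicalSpace X] {S : Set (X →L[ℂ] X)}

theorem carrier_subset_kohlerConv : carrier S ⊆ KohlerConv S :=
  (subset_convexHull ℝ _).trans subset_closure

theorem convex_kohlerConv [IsTopologicalAddGroup X] [ContinuousConstSMul ℝ X] :
    Convex ℝ (KohlerConv S) :=
  (convex_convexHull ℝ _).closure

theorem kohlerConv_subset {D : Set (X → X)} (hD : Convex ℝ D) (hDc : IsClosed D)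
    (hSD : carrier S ⊆ D) : KohlerConv S ⊆ D :=
  closure_minimal (convexHull_min hSD hD) hDc

theorem isCompact_kohlerConv
    (horb : ∀ x : X, IsCompact (closure ((fun R : X → X => R x) '' convS S))) :
    IsCompact (KohlerConv S) :=
  (isCompact_univ_pi horb).of_isClosed_subset isClosed_closure fun _ hf =>
    mem_univ_pi.2 fun x => image_closure_subset_closure_image (continuous_apply x) ⟨_, hf, rfl⟩

theorem comp_mem_kohlerConv_of_mem [IsTopologicalAddGroup X] [ContinuousConstSMul ℝ X]
    (hsemi : ∀ a ∈ S, ∀ b ∈ S, a ∘L b ∈ S) {T : X →L[ℂ] X} (hT : T ∈ S) {g : X → X}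
    (hg : g ∈ KohlerConv S) : (T : X → X) ∘ g ∈ KohlerConv S :=
  kohlerConv_subset
    (convex_kohlerConv.linear_preimage
      (LinearMap.compLeft ((T : X →ₗ[ℂ] X).restrictScalars ℝ) X))
    (isClosed_closure.preimage (Pi.continuous_postcomp T.continuous))
    (by rintro _ ⟨R, hR, rfl⟩; exact carrier_subset_kohlerConv ⟨T ∘L R, hsemi T hT R hR, rfl⟩)
    hg

theorem comp_mem_kohlerConv [IsTopologicalAddGroup X] [ContinuousConstSMul ℝ X]
    (hsemi : ∀ a ∈ S, ∀ b ∈ S, a ∘L b ∈ S) {f g : X → X} (hf : f ∈ KohlerConv S)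
    (hg : g ∈ KohlerConv S) : f ∘ g ∈ KohlerConv S :=
  kohlerConv_subset (convex_kohlerConv.linear_preimage (LinearMap.funLeft ℝ X g))
    (isClosed_closure.preimage (Pi.continuous_precomp g))
    (by rintro _ ⟨T, hT, rfl⟩; exact comp_mem_kohlerConv_of_mem hsemi hT hg) hf

theorem isRightZeroIn_kohlerConv_iff [T1Space X] {Q : X → X} :
    IsRightZeroIn (KohlerConv S) Q ↔ Q ∈ KohlerConv S ∧ ∀ T ∈ S, (T : X → X) ∘ Q = Q := by
  refine ⟨fun hQ => ⟨hQ.1, fun T hT => hQ.2 _ (carrier_subset_kohlerConv ⟨T, hT, rfl⟩)⟩,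
    fun hQ => ⟨hQ.1, fun R hR => ?_⟩⟩
  refine kohlerConv_subset ((convex_singleton Q).linear_preimage (LinearMap.funLeft ℝ X Q))
    (isClosed_singleton.preimage (Pi.continuous_precomp Q)) ?_ hR
  rintro _ ⟨T, hT, rfl⟩
  exact hQ.2 T hT

theorem exists_mem_kohlerConv_forall_comp_eq [IsTopologicalAddGroup X] [ContinuousConstSMul ℝ X]
    [SeparatingDual ℝ X] (hamen : IsLeftAmenableSet (carrier S))
    (horb : ∀ x : X, IsCompact (closure ((fun R : X → X => R x) '' convS S))) :
    ∃ q ∈ KohlerConv S, ∀ T ∈ S, (T : X → X) ∘ q = q := by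
  obtain ⟨m, hpos, hone, hinv⟩ := hamen
  have hK := isCompact_kohlerConv horb
  let μ := m ∘ₗ restrictDual hK carrier_subset_kohlerConv
  obtain ⟨q, hqK, hq⟩ := exists_mem_forall_dual_eq hK convex_kohlerConv μ fun φ r hφ =>
    BoundedContinuousFunction.map_le_of_forall_apply_le m hpos hone fun s =>
      hφ s (carrier_subset_kohlerConv s.2)
  refine ⟨q, hqK, fun T hT => funext fun x => ?_⟩
  refine (SeparatingDual.eq_iff_forall_dual_eq (R := ℝ)).2 fun ℓ => ?_
  have h1 : ℓ (T (q x)) = μ (ℓ ∘L T.restrictScalars ℝ ∘L .proj x) :=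
    hq (ℓ ∘L T.restrictScalars ℝ ∘L .proj x)
  have h2 : ℓ (q x) = μ (ℓ ∘L .proj x) := hq (ℓ ∘L .proj x)
  rw [Function.comp_apply, h1, h2]
  exact hinv ⟨T, T, hT, rfl⟩ _ _ fun _ _ => rfl

end KohlerSemigroup

variable {X : Type*} [AddCommGroup X] [Module ℂ X] [TopologicalSpace X]
  [IsTopologicalAddGroup X] [ContinuousSMul ℂ X] [T2Space X] [LocallyConvexSpace ℝ X]

/-- For a left amenable operator semigroup `𝒮` on a Hausdorff
locally convex space with relatively compact convex orbits, the kernel of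
`K(co 𝒮)` is nonempty and coincides with the set of `Q ∈ K(co 𝒮)` with
`T ∘ Q = Q` for all `T ∈ 𝒮`, and with the set of right zeros of `K(co 𝒮)`. -/
theorem kernel_description (S : Set (X →L[ℂ] X))
    (hsemi : ∀ a ∈ S, ∀ b ∈ S, a ∘L b ∈ S)
    (hamen : IsLeftAmenableSet (carrier S))
    (horb : ∀ x : X, IsCompact (closure ((fun R : X → X => R x) '' convS S))) :
    (semigroupKernel (KohlerConv S)).Nonempty ∧
    semigroupKernel (KohlerConv S) =
      {Q | Q ∈ KohlerConv S ∧ ∀ T ∈ S, (T : X → X) ∘ Q = Q} ∧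
    semigroupKernel (KohlerConv S) = {Q | IsRightZeroIn (KohlerConv S) Q} := by
  -- needed for the instance `SeparatingDual ℝ X` coming from local convexity
  have : ContinuousSMul ℝ X := IsScalarTower.continuousSMul ℂ
  obtain ⟨q, hqK, hq⟩ := exists_mem_kohlerConv_forall_comp_eq hamen horb
  have hqZ : IsRightZeroIn (KohlerConv S) q := isRightZeroIn_kohlerConv_iff.2 ⟨hqK, hq⟩
  have hker := semigroupKernel_eq_setOf_isRightZeroIn
    (fun _ ha _ hb => comp_mem_kohlerConv hsemi ha hb) hqZ
  exact ⟨⟨q, hker ▸ hqZ⟩, hker.trans (ext fun _ => isRightZeroIn_kohlerConv_iff), hker⟩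

end Stmt16
end
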